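/- For all real λ₁ > 0 and λ₂ > 0, setting uᵢ = 1/(e^{λᵢ} + e^{−λᵢ}) and f(u) = (1 − √(1 − 4u²))/(2u²), the ladder-diagram geometric series converges and satisfies Σ_{k=1}^∞ (u₁·f(u₁)·u₂·f(u₂))^k = 1/(e^{λ₁+λ₂} − 1). -/
import Mathlib


/-- The Catalan generating function summing up rainbow subdiagrams. -/
noncomputable def catalanGF (u : ℝ) : ℝ :=
  (1 - Real.sqrt (1 - 4 * u ^ 2)) / (2 * u ^ 2)

/-- The change of variables `u = 1/(e^λ + e^{-λ})`. -/
noncomputable def uOf (l : ℝ) : ℝ := (Real.exp l + Real.exp (-l))⁻¹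

lemma key (l : ℝ) (hl : 0 < l) : uOf l * catalanGF (uOf l) = Real.exp (-l) := by
  have hd : (0:ℝ) < Real.exp l + Real.exp (-l) := by positivity
  have hsqrt : Real.sqrt (1 - 4 * (uOf l) ^ 2)
      = (Real.exp l - Real.exp (-l)) / (Real.exp l + Real.exp (-l)) := by
    have h1 : 1 - 4 * (uOf l) ^ 2
        = ((Real.exp l - Real.exp (-l)) / (Real.exp l + Real.exp (-l))) ^ 2 := by
      rw [uOf, div_pow]
      field_simp
      ring_nf
      rw [← Real.exp_add, add_neg_cancel, Real.exp_zero]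
      ring
    rw [h1, Real.sqrt_sq]
    apply div_nonneg _ hd.le
    have := Real.exp_lt_exp.2 (neg_lt_self hl)
    linarith
  rw [catalanGF, hsqrt, uOf]
  have h2 : 1 - (Real.exp l - Real.exp (-l)) / (Real.exp l + Real.exp (-l))
      = 2 * Real.exp (-l) / (Real.exp l + Real.exp (-l)) := by
    field_simp; ring
  rw [h2]
  field_simp

theorem ladder_diagram_geometric_series
    (l₁ l₂ : ℝ) (h₁ : 0 < l₁) (h₂ : 0 < l₂) :
    HasSum
      (fun k : ℕ =>
        (uOf l₁ * catalanGF (uOf l₁) * (uOf l₂ * catalanGF (uOf l₂))) ^ (k + 1))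
      (1 / (Real.exp (l₁ + l₂) - 1)) := by
  rw [key l₁ h₁, key l₂ h₂, ← Real.exp_add]
  set r := Real.exp (-l₁ + -l₂) with hr
  have hr0 : 0 < r := Real.exp_pos _
  have hr1 : r < 1 := Real.exp_lt_one_iff.2 (by linarith)
  have h := (hasSum_geometric_of_lt_one hr0.le hr1).mul_left r
  have heq : ∀ k : ℕ, r * r ^ k = r ^ (k + 1) := fun k => (pow_succ' r k).symm
  have h' : HasSum (fun k : ℕ => r ^ (k + 1)) (r * (1 - r)⁻¹) := by
    simpa [heq] using h
  convert h' using 1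
  have : Real.exp (l₁ + l₂) = r⁻¹ := by
    rw [hr, ← Real.exp_neg]; ring_nf
  rw [this]
  field_simp
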